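/- Let A ⊆ ℤ and n ∈ ℤ. If Mχ_A(n+1) + Mχ_A(n−1) < 2·Mχ_A(n) (i.e. n lies in the set S₋Mχ_A of concave points of Mχ_A), then n ∈ A. -/
import Mathlib


open Classical

/-- Discrete noncentered average `A_{r,s}f(n) = (1/(r+s+1)) ∑_{j=-r}^{s} |f(n+j)|`. -/
noncomputable def avg (f : ℤ → ℝ) (r s : ℕ) (n : ℤ) : ℝ :=
  (1 / (r + s + 1 : ℝ)) * ∑ j ∈ Finset.Icc (-(r : ℤ)) (s : ℤ), |f (n + j)|

/-- Discrete noncentered Hardy–Littlewood maximal function `Mf(n) = sup_{r,s∈ℕ} A_{r,s}f(n)`. -/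
noncomputable def M (f : ℤ → ℝ) (n : ℤ) : ℝ :=
  ⨆ r : ℕ, ⨆ s : ℕ, avg f r s n

/-- Characteristic function of `A ⊆ ℤ`. -/
noncomputable def chi (A : Set ℤ) (n : ℤ) : ℝ := if n ∈ A then 1 else 0

/-- The set of convex points `S₊f`. -/
def Splus (f : ℤ → ℝ) : Set ℤ := {n : ℤ | 2 * f n ≤ f (n + 1) + f (n - 1)}

/-- The set of concave points `S₋f`. -/
def Sminus (f : ℤ → ℝ) : Set ℤ := (Splus f)ᶜ

/-- The left boundary `∂ₗS₋f`. -/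
def bdl (f : ℤ → ℝ) : Set ℤ := {n : ℤ | n ∈ Sminus f ∧ n - 1 ∈ Splus f}

/-- The right boundary `∂ᵣS₋f`. -/
def bdr (f : ℤ → ℝ) : Set ℤ := {n : ℤ | n ∈ Sminus f ∧ n + 1 ∈ Splus f}

lemma chi_nonneg (A : Set ℤ) (k : ℤ) : 0 ≤ chi A k := by
  unfold chi; split_ifs <;> norm_num

lemma chi_le_one (A : Set ℤ) (k : ℤ) : chi A k ≤ 1 := by
  unfold chi; split_ifs <;> norm_num

lemma avg_eq (f : ℤ → ℝ) (r s : ℕ) (n : ℤ) :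
    avg f r s n = (1 / (r + s + 1 : ℝ)) * ∑ k ∈ Finset.Icc (n - r) (n + s), |f k| := by
  unfold avg
  congr 1
  have hmap : Finset.Icc (n - (r:ℤ)) (n + (s:ℤ)) =
      Finset.map (addRightEmbedding n) (Finset.Icc (-(r:ℤ)) (s:ℤ)) := by
    rw [Finset.map_add_right_Icc]
    congr 1 <;> ring
  rw [hmap, Finset.sum_map]
  refine Finset.sum_congr rfl fun j _ => ?_
  simp [addRightEmbedding, add_comm]

lemma avg_nonneg' (f : ℤ → ℝ) (r s : ℕ) (n : ℤ) : 0 ≤ avg f r s n := by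
  unfold avg
  apply mul_nonneg
  · positivity
  · exact Finset.sum_nonneg fun j _ => abs_nonneg _

lemma avg_le_one (A : Set ℤ) (r s : ℕ) (n : ℤ) : avg (chi A) r s n ≤ 1 := by
  unfold avg
  have hcard : (Finset.Icc (-(r : ℤ)) (s : ℤ)).card = r + s + 1 := by
    rw [Int.card_Icc]; omega
  have hsum : ∑ j ∈ Finset.Icc (-(r : ℤ)) (s : ℤ), |chi A (n + j)| ≤ (r + s + 1 : ℝ) := by
    calc ∑ j ∈ Finset.Icc (-(r : ℤ)) (s : ℤ), |chi A (n + j)|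
        ≤ ∑ j ∈ Finset.Icc (-(r : ℤ)) (s : ℤ), (1 : ℝ) := by
          apply Finset.sum_le_sum
          intro j _
          rw [abs_of_nonneg (chi_nonneg A _)]
          exact chi_le_one A _
      _ = (r + s + 1 : ℝ) := by rw [Finset.sum_const, hcard]; push_cast; ring
  have hpos : (0 : ℝ) < (r + s + 1 : ℝ) := by positivity
  rw [one_div, inv_mul_le_iff₀ hpos]
  linarith

lemma le_M (A : Set ℤ) (r s : ℕ) (n : ℤ) : avg (chi A) r s n ≤ M (chi A) n := by
  unfold M
  have hb1 : ∀ r', BddAbove (Set.range fun s' => avg (chi A) r' s' n) := fun r' =>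
    ⟨1, by rintro x ⟨s', rfl⟩; exact avg_le_one A r' s' n⟩
  have hb2 : BddAbove (Set.range fun r' => ⨆ s', avg (chi A) r' s' n) :=
    ⟨1, by rintro x ⟨r', rfl⟩; exact ciSup_le fun s' => avg_le_one A r' s' n⟩
  exact le_ciSup_of_le hb2 r (le_ciSup_of_le (hb1 r) s le_rfl)

lemma M_le (A : Set ℤ) (n : ℤ) (c : ℝ) (h : ∀ r s, avg (chi A) r s n ≤ c) :
    M (chi A) n ≤ c := by
  unfold M
  exact ciSup_le fun r => ciSup_le fun s => h r s

lemma key (A : Set ℤ) (n : ℤ) (hn : n ∉ A) (r s : ℕ) :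
    2 * avg (chi A) r s n ≤ M (chi A) (n + 1) + M (chi A) (n - 1) := by
  have hfn : chi A n = 0 := by unfold chi; simp [hn]
  match r, s with
  | 0, 0 =>
    have : avg (chi A) 0 0 n = 0 := by
      rw [avg_eq]
      have : Finset.Icc (n - (0:ℕ)) (n + (0:ℕ)) = {n} := by
        ext k; simp only [Finset.mem_Icc, Finset.mem_singleton]; omega
      rw [this]; simp [hfn]
    rw [this]
    have h1 := (avg_nonneg' (chi A) 0 0 (n+1)).trans (le_M A 0 0 (n+1))
    have h2 := (avg_nonneg' (chi A) 0 0 (n-1)).trans (le_M A 0 0 (n-1))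
    linarith
  | r' + 1, s' + 1 =>
    have e1 : avg (chi A) (r' + 1) (s' + 1) n = avg (chi A) (r' + 2) s' (n + 1) := by
      have hset : Finset.Icc (n - ((r'+1:ℕ):ℤ)) (n + ((s'+1:ℕ):ℤ)) =
          Finset.Icc ((n+1) - ((r'+2:ℕ):ℤ)) ((n+1) + ((s':ℕ):ℤ)) := by
        congr 1 <;> push_cast <;> ring
      rw [avg_eq, avg_eq, ← hset]
      push_cast
      ring_nf
    have e2 : avg (chi A) (r' + 1) (s' + 1) n = avg (chi A) r' (s' + 2) (n - 1) := by
      have hset : Finset.Icc (n - ((r'+1:ℕ):ℤ)) (n + ((s'+1:ℕ):ℤ)) =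
          Finset.Icc ((n-1) - ((r':ℕ):ℤ)) ((n-1) + ((s'+2:ℕ):ℤ)) := by
        congr 1 <;> push_cast <;> ring
      rw [avg_eq, avg_eq, ← hset]
      push_cast
      ring_nf
    have h1 : avg (chi A) (r' + 1) (s' + 1) n ≤ M (chi A) (n + 1) := e1 ▸ le_M A _ _ _
    have h2 : avg (chi A) (r' + 1) (s' + 1) n ≤ M (chi A) (n - 1) := e2 ▸ le_M A _ _ _
    linarith
  | r' + 1, 0 =>
    set S : ℝ := ∑ k ∈ Finset.Icc (n - (r' + 1 : ℤ)) (n - 1), |chi A k| with hS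
    have hSnn : 0 ≤ S := Finset.sum_nonneg fun k _ => abs_nonneg _
    set x : ℝ := (r' : ℝ) + 1 with hx
    have hx1 : (1 : ℝ) ≤ x := by
      have hc : (0 : ℝ) ≤ (r' : ℝ) := Nat.cast_nonneg r'
      rw [hx]; linarith
    -- avg (chi A) (r'+1) 0 n = S / (x+1)
    have split : Finset.Icc (n - ((r' + 1 : ℕ) : ℤ)) (n + (0:ℕ)) =
        insert n (Finset.Icc (n - (r' + 1 : ℤ)) (n - 1)) := by
      ext k; simp [Finset.mem_Icc, Finset.mem_insert]; omega
    have eavg : avg (chi A) (r' + 1) 0 n = (1 / (x + 1)) * S := by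
      rw [avg_eq, split, Finset.sum_insert (by simp [Finset.mem_Icc]),
        abs_of_nonneg (chi_nonneg A n), hfn, ← hS, hx]
      push_cast
      ring
    -- lower bound for M at n - 1
    have hm1 : (1 / x) * S ≤ M (chi A) (n - 1) := by
      have heq : avg (chi A) r' 0 (n - 1) = (1 / x) * S := by
        have hset : Finset.Icc ((n-1) - ((r':ℕ):ℤ)) ((n-1) + ((0:ℕ):ℤ)) =
            Finset.Icc (n - (r' + 1 : ℤ)) (n - 1) := by
          congr 1 <;> push_cast <;> ring
        rw [avg_eq, hset, ← hS, hx]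
        push_cast
        ring
      exact heq ▸ le_M A r' 0 (n - 1)
    -- lower bound for M at n + 1
    have hm2 : (1 / (x + 2)) * S ≤ M (chi A) (n + 1) := by
      have hsub : avg (chi A) (r' + 2) 0 (n + 1) ≥ (1 / (x + 2)) * S := by
        rw [avg_eq]
        have hsums : S ≤ ∑ k ∈ Finset.Icc (n + 1 - ((r' + 2 : ℕ) : ℤ)) (n + 1 + (0:ℕ)), |chi A k| := by
          apply Finset.sum_le_sum_of_subset_of_nonneg
          · intro k hk; simp only [Finset.mem_Icc] at *; omega
          · intro k _ _; exact abs_nonneg _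
        have hden : ((r' + 2 : ℕ) : ℝ) + (0:ℕ) + 1 = x + 2 := by push_cast [hx]; ring
        rw [hden]
        have : (0:ℝ) < x + 2 := by linarith
        apply mul_le_mul_of_nonneg_left hsums (by positivity)
      exact le_trans hsub (le_M A (r' + 2) 0 (n + 1))
    -- arithmetic
    have harth : 2 * ((1 / (x + 1)) * S) ≤ (1 / (x + 2)) * S + (1 / x) * S := by
      have h0 : (0:ℝ) < x := by linarith
      have h1 : (0:ℝ) < x + 1 := by linarith
      have h2 : (0:ℝ) < x + 2 := by linarith
      have key2 : 2 / (x + 1) ≤ 1 / (x + 2) + 1 / x := by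
        rw [div_add_div _ _ (ne_of_gt h2) (ne_of_gt h0),
          div_le_div_iff₀ h1 (by positivity)]
        nlinarith
      have hmul : 2 / (x + 1) * S ≤ (1 / (x + 2) + 1 / x) * S :=
        mul_le_mul_of_nonneg_right key2 hSnn
      have e3 : 2 / (x + 1) * S = 2 * (1 / (x + 1) * S) := by ring
      have e4 : (1 / (x + 2) + 1 / x) * S = 1 / (x + 2) * S + 1 / x * S := by ring
      linarith
    rw [eavg]
    linarith
  | 0, s' + 1 =>
    set S : ℝ := ∑ k ∈ Finset.Icc (n + 1) (n + (s' + 1 : ℤ)), |chi A k| with hS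
    have hSnn : 0 ≤ S := Finset.sum_nonneg fun k _ => abs_nonneg _
    set x : ℝ := (s' : ℝ) + 1 with hx
    have hx1 : (1 : ℝ) ≤ x := by
      have hc : (0 : ℝ) ≤ (s' : ℝ) := Nat.cast_nonneg s'
      rw [hx]; linarith
    have split : Finset.Icc (n - ((0:ℕ) : ℤ)) (n + ((s' + 1 : ℕ) : ℤ)) =
        insert n (Finset.Icc (n + 1) (n + (s' + 1 : ℤ))) := by
      ext k; simp [Finset.mem_Icc, Finset.mem_insert]; omega
    have eavg : avg (chi A) 0 (s' + 1) n = (1 / (x + 1)) * S := by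
      rw [avg_eq, split, Finset.sum_insert (by simp [Finset.mem_Icc]),
        abs_of_nonneg (chi_nonneg A n), hfn, ← hS, hx]
      push_cast
      ring
    have hm1 : (1 / x) * S ≤ M (chi A) (n + 1) := by
      have heq : avg (chi A) 0 s' (n + 1) = (1 / x) * S := by
        have hset : Finset.Icc ((n+1) - ((0:ℕ):ℤ)) ((n+1) + ((s':ℕ):ℤ)) =
            Finset.Icc (n + 1) (n + (s' + 1 : ℤ)) := by
          congr 1 <;> push_cast <;> ring
        rw [avg_eq, hset, ← hS, hx]
        push_cast
        ring
      exact heq ▸ le_M A 0 s' (n + 1)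
    have hm2 : (1 / (x + 2)) * S ≤ M (chi A) (n - 1) := by
      have hsub : avg (chi A) 0 (s' + 2) (n - 1) ≥ (1 / (x + 2)) * S := by
        rw [avg_eq]
        have hsums : S ≤ ∑ k ∈ Finset.Icc (n - 1 - ((0:ℕ) : ℤ)) (n - 1 + ((s' + 2 : ℕ) : ℤ)), |chi A k| := by
          apply Finset.sum_le_sum_of_subset_of_nonneg
          · intro k hk; simp only [Finset.mem_Icc] at *; omega
          · intro k _ _; exact abs_nonneg _
        have hden : ((0 : ℕ) : ℝ) + ((s' + 2 : ℕ) : ℝ) + 1 = x + 2 := by push_cast [hx]; ring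
        rw [hden]
        apply mul_le_mul_of_nonneg_left hsums (by positivity)
      exact le_trans hsub (le_M A 0 (s' + 2) (n - 1))
    have harth : 2 * ((1 / (x + 1)) * S) ≤ (1 / (x + 2)) * S + (1 / x) * S := by
      have h0 : (0:ℝ) < x := by linarith
      have h1 : (0:ℝ) < x + 1 := by linarith
      have h2 : (0:ℝ) < x + 2 := by linarith
      have key2 : 2 / (x + 1) ≤ 1 / (x + 2) + 1 / x := by
        rw [div_add_div _ _ (ne_of_gt h2) (ne_of_gt h0),
          div_le_div_iff₀ h1 (by positivity)]
        nlinarith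
      have hmul : 2 / (x + 1) * S ≤ (1 / (x + 2) + 1 / x) * S :=
        mul_le_mul_of_nonneg_right key2 hSnn
      have e3 : 2 / (x + 1) * S = 2 * (1 / (x + 1) * S) := by ring
      have e4 : (1 / (x + 2) + 1 / x) * S = 1 / (x + 2) * S + 1 / x * S := by ring
      linarith
    rw [eavg]
    linarith

theorem concave_point_mem (A : Set ℤ) (n : ℤ)
    (h : M (chi A) (n + 1) + M (chi A) (n - 1) < 2 * M (chi A) n) : n ∈ A := by
  by_contra hn
  have hM : M (chi A) n ≤ (M (chi A) (n + 1) + M (chi A) (n - 1)) / 2 := by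
    apply M_le
    intro r s
    have := key A n hn r s
    linarith
  linarith
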